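/- Descent cone of the ℓ₁/ℓ₂ norm: let ℝᵖ = ⊕_{g=1}^q V_g be an orthogonal decomposition into subspaces, J₀(u) = Σ_g ‖u_g‖, u₀ ∈ ℝᵖ with active groups I = {g : (u₀)_g ≠ 0}. Then for J(x) = J₀(x) (take D = Id), the descent cone 𝒟_J(u₀) equals (ℰ ∩ bd 𝒞_J(u₀)) ∪ int 𝒞_J(u₀), where ℰ = {w : for each g ∈ I, w_g is a scalar multiple of (u₀)_g}, 𝒞_J(u₀) = {w : ⟨e, w⟩ + Σ_{g∉I} ‖w_g‖ ≤ 0} with e = Σ_{g∈I} (u₀)_g/‖(u₀)_g‖, and bd denotes the boundary (equality in the defining inequality). -/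

import Mathlib

open RealInnerProductSpace Classical


variable {G : ℕ}

/-- Cauchy–Schwarz based bound for active groups. -/
lemma key_ineq (a b : EuclideanSpace ℝ (Fin G)) (ha : a ≠ 0) :
    ⟪(‖a‖)⁻¹ • a, b - a⟫ ≤ ‖b‖ - ‖a‖ := by
  have hna : 0 < ‖a‖ := norm_pos_iff.mpr ha
  have hcs : ⟪a, b⟫ ≤ ‖a‖ * ‖b‖ := real_inner_le_norm a b
  rw [real_inner_smul_left, inner_sub_right, real_inner_self_eq_norm_sq]
  have e1 : (‖a‖)⁻¹ * ‖a‖ ^ 2 = ‖a‖ := by field_simp [sq]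
  have e2 : (‖a‖)⁻¹ * ⟪a, b⟫ ≤ ‖b‖ := by
    calc (‖a‖)⁻¹ * ⟪a, b⟫ ≤ (‖a‖)⁻¹ * (‖a‖ * ‖b‖) :=
          mul_le_mul_of_nonneg_left hcs (inv_nonneg.mpr hna.le)
      _ = ‖b‖ := by field_simp
  rw [mul_sub, e1]
  linarith

lemma key_eq (a b : EuclideanSpace ℝ (Fin G)) (ha : a ≠ 0)
    (h : ⟪(‖a‖)⁻¹ • a, b - a⟫ = ‖b‖ - ‖a‖) :
    b = ((‖a‖)⁻¹ * ‖b‖) • a := by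
  have hna : 0 < ‖a‖ := norm_pos_iff.mpr ha
  rw [real_inner_smul_left, inner_sub_right, real_inner_self_eq_norm_sq] at h
  have hX : ⟪a, b⟫ - ‖a‖ ^ 2 = ‖a‖ * (‖b‖ - ‖a‖) := by
    rw [← h, ← mul_assoc, mul_inv_cancel₀ hna.ne', one_mul]
  have h2 : ⟪a, b⟫ = ‖a‖ * ‖b‖ := by nlinarith [hX]
  have h4 : ‖b‖ • a = ‖a‖ • b := (inner_eq_norm_mul_iff_real).mp h2
  have h5 : (‖a‖)⁻¹ • (‖b‖ • a) = (‖a‖)⁻¹ • (‖a‖ • b) := by rw [h4]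
  rw [smul_smul, smul_smul, inv_mul_cancel₀ hna.ne', one_smul] at h5
  exact h5.symm

/-- Quadratic upper bound on the norm along a direction. -/
lemma quad_bound (a w : EuclideanSpace ℝ (Fin G)) (ha : a ≠ 0) (s : ℝ) :
    ‖a + s • w‖ ≤ ‖a‖ + s * ⟪(‖a‖)⁻¹ • a, w⟫ + s ^ 2 * (‖w‖ ^ 2 / (2 * ‖a‖)) := by
  have hna : 0 < ‖a‖ := norm_pos_iff.mpr ha
  have h3 : ‖a + s • w‖ ^ 2 = ‖a‖ ^ 2 + 2 * (s * ⟪a, w⟫) + s ^ 2 * ‖w‖ ^ 2 := by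
    rw [norm_add_sq_real, real_inner_smul_right, norm_smul]
    simp [mul_pow, sq_abs]
  have h2 : 2 * ‖a‖ * ‖a + s • w‖ ≤ ‖a‖ ^ 2 + ‖a + s • w‖ ^ 2 := by
    nlinarith [sq_nonneg (‖a‖ - ‖a + s • w‖)]
  rw [real_inner_smul_left]
  rw [← mul_le_mul_iff_right₀ (show (0:ℝ) < 2 * ‖a‖ by positivity)]
  calc 2 * ‖a‖ * ‖a + s • w‖ ≤ ‖a‖ ^ 2 + ‖a + s • w‖ ^ 2 := h2
    _ = 2 * ‖a‖ ^ 2 + 2 * (s * ⟪a, w⟫) + s ^ 2 * ‖w‖ ^ 2 := by rw [h3]; ring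
    _ = 2 * ‖a‖ * (‖a‖ + s * ((‖a‖)⁻¹ * ⟪a, w⟫) + s ^ 2 * (‖w‖ ^ 2 / (2 * ‖a‖))) := by
        field_simp

/-- The ℓ₁/ℓ₂ norm on the group-structured space `(Fin q → EuclideanSpace ℝ (Fin G))`. -/
noncomputable def l1l2 {q G : ℕ} (u : Fin q → EuclideanSpace ℝ (Fin G)) : ℝ :=
  ∑ g, ‖u g‖

/-- The directional-derivative function `w ↦ ⟨e, w⟩ + Σ_{g∉I} ‖w_g‖` of the ℓ₁/ℓ₂
norm at `u₀`, where `e = Σ_{g∈I} (u₀)_g/‖(u₀)_g‖` and `I` is the set of active groups. -/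
noncomputable def l1l2DirDeriv {q G : ℕ}
    (u₀ w : Fin q → EuclideanSpace ℝ (Fin G)) : ℝ :=
  ∑ g, if u₀ g = 0 then ‖w g‖ else ⟪(‖u₀ g‖)⁻¹ • u₀ g, w g⟫

/-- Descent cone of the ℓ₁/ℓ₂ norm: it equals `(ℰ ∩ bd 𝒞) ∪ int 𝒞`, where
`ℰ` consists of directions whose active-group components are scalar multiples of
those of `u₀`, and `bd 𝒞`, `int 𝒞` are the equality and strict-inequality parts
of the critical cone `𝒞 = {w : dJ(u₀)(w) ≤ 0}`. -/
theorem descentCone_l1l2 {q G : ℕ} (u₀ : Fin q → EuclideanSpace ℝ (Fin G)) :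
    {w | ∃ t : ℝ, 0 ≤ t ∧ ∃ u, l1l2 u ≤ l1l2 u₀ ∧ w = t • (u - u₀)} =
      ({w | (∀ g, u₀ g ≠ 0 → ∃ c : ℝ, w g = c • u₀ g) ∧ l1l2DirDeriv u₀ w = 0} ∪
       {w | l1l2DirDeriv u₀ w < 0}) := by
  ext w
  simp only [Set.mem_setOf_eq, Set.mem_union]
  constructor
  · rintro ⟨t, ht, u, hu, rfl⟩
    have hterm : ∀ g, (if u₀ g = 0 then ‖(t • (u - u₀)) g‖
        else ⟪(‖u₀ g‖)⁻¹ • u₀ g, (t • (u - u₀)) g⟫) ≤ t * (‖u g‖ - ‖u₀ g‖) := by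
      intro g
      simp only [Pi.smul_apply, Pi.sub_apply]
      split_ifs with h
      · rw [norm_smul, Real.norm_eq_abs, abs_of_nonneg ht, h, sub_zero, norm_zero, sub_zero]
      · rw [real_inner_smul_right]
        exact mul_le_mul_of_nonneg_left (key_ineq (u₀ g) (u g) h) ht
    have hsum : l1l2DirDeriv u₀ (t • (u - u₀)) ≤ t * (l1l2 u - l1l2 u₀) := by
      unfold l1l2DirDeriv l1l2
      rw [← Finset.sum_sub_distrib, Finset.mul_sum]
      exact Finset.sum_le_sum fun g _ => hterm g
    have hle0 : t * (l1l2 u - l1l2 u₀) ≤ 0 :=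
      mul_nonpos_iff.mpr (Or.inl ⟨ht, by linarith⟩)
    rcases lt_or_eq_of_le (hsum.trans hle0) with hlt | heq
    · exact Or.inr hlt
    · refine Or.inl ⟨?_, heq⟩
      have hsum2 : l1l2DirDeriv u₀ (t • (u - u₀)) = t * (l1l2 u - l1l2 u₀) :=
        le_antisymm hsum (hle0.trans_eq heq.symm)
      have hEq : ∀ g ∈ Finset.univ, (if u₀ g = 0 then ‖(t • (u - u₀)) g‖
          else ⟪(‖u₀ g‖)⁻¹ • u₀ g, (t • (u - u₀)) g⟫) = t * (‖u g‖ - ‖u₀ g‖) := by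
        rw [← Finset.sum_eq_sum_iff_of_le (fun g _ => hterm g)]
        unfold l1l2DirDeriv l1l2 at hsum2
        rw [← Finset.sum_sub_distrib, Finset.mul_sum] at hsum2
        exact hsum2
      intro g hg
      rcases eq_or_lt_of_le ht with ht0 | ht0
      · exact ⟨0, by simp [← ht0]⟩
      · have he := hEq g (Finset.mem_univ g)
        rw [if_neg hg] at he
        simp only [Pi.smul_apply, Pi.sub_apply] at he ⊢
        rw [real_inner_smul_right] at he
        have he2 : ⟪(‖u₀ g‖)⁻¹ • u₀ g, u g - u₀ g⟫ = ‖u g‖ - ‖u₀ g‖ :=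
          mul_left_cancel₀ ht0.ne' he
        have hug := key_eq (u₀ g) (u g) hg he2
        refine ⟨t * ((‖u₀ g‖)⁻¹ * ‖u g‖ - 1), ?_⟩
        conv_lhs => rw [hug]
        module
  · rintro (⟨he, hdd⟩ | hlt)
    · choose! c hc using he
      set s : ℝ := (1 + ∑ g, |c g|)⁻¹ with hs
      have hsum_nonneg : 0 ≤ ∑ g, |c g| := Finset.sum_nonneg fun g _ => abs_nonneg _
      have hs0 : 0 < s := inv_pos.mpr (by linarith)
      have hsc : ∀ g, 0 ≤ 1 + s * c g := by
        intro g
        have h1 : |c g| ≤ ∑ g', |c g'| :=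
          Finset.single_le_sum (f := fun g => |c g|) (fun _ _ => abs_nonneg _)
            (Finset.mem_univ g)
        have h2 : s * |c g| ≤ s * (1 + ∑ g', |c g'|) :=
          mul_le_mul_of_nonneg_left (by linarith) hs0.le
        rw [hs, inv_mul_cancel₀ (by linarith : (1 + ∑ g', |c g'|) ≠ 0)] at h2
        have h3 : |s * c g| ≤ 1 := by
          rw [abs_mul, abs_of_nonneg hs0.le]; exact h2
        have := (abs_le.mp h3).1
        linarith
      refine ⟨s⁻¹, (inv_pos.mpr hs0).le, u₀ + s • w, ?_, ?_⟩
      · have key : l1l2 (u₀ + s • w) = l1l2 u₀ + s * l1l2DirDeriv u₀ w := by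
          unfold l1l2 l1l2DirDeriv
          rw [Finset.mul_sum, ← Finset.sum_add_distrib]
          refine Finset.sum_congr rfl fun g _ => ?_
          by_cases hg : u₀ g = 0
          · simp [hg, norm_smul, abs_of_nonneg hs0.le]
          · rw [if_neg hg, Pi.add_apply, Pi.smul_apply, hc g hg]
            have hrw : u₀ g + s • (c g • u₀ g) = (1 + s * c g) • u₀ g := by module
            rw [hrw, norm_smul, Real.norm_eq_abs, abs_of_nonneg (hsc g),
              real_inner_smul_right, real_inner_smul_left, real_inner_self_eq_norm_sq]
            have hn : 0 < ‖u₀ g‖ := norm_pos_iff.mpr hg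
            field_simp
        rw [key, hdd]; simp
      · simp [add_sub_cancel_left, smul_smul, inv_mul_cancel₀ hs0.ne']
    · set C : ℝ := ∑ g, (if u₀ g = 0 then 0 else ‖w g‖ ^ 2 / (2 * ‖u₀ g‖)) with hC
      have hC0 : 0 ≤ C := Finset.sum_nonneg fun g _ => by
        split_ifs
        · exact le_rfl
        · positivity
      set d : ℝ := l1l2DirDeriv u₀ w with hd
      set s : ℝ := -d / (C + 1) with hs
      have hs0 : 0 < s := div_pos (neg_pos.mpr hlt) (by linarith)
      have hsC : s * C ≤ -d := by
        rw [hs, div_mul_eq_mul_div, div_le_iff₀ (by linarith)]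
        nlinarith
      refine ⟨s⁻¹, (inv_pos.mpr hs0).le, u₀ + s • w, ?_,
        by simp [add_sub_cancel_left, smul_smul, inv_mul_cancel₀ hs0.ne']⟩
      have hb : l1l2 (u₀ + s • w) ≤ l1l2 u₀ + s * d + s ^ 2 * C := by
        rw [hd, hC]
        unfold l1l2 l1l2DirDeriv
        rw [Finset.mul_sum, Finset.mul_sum, ← Finset.sum_add_distrib,
          ← Finset.sum_add_distrib]
        refine Finset.sum_le_sum fun g _ => ?_
        by_cases hg : u₀ g = 0
        · simp [hg, norm_smul, abs_of_nonneg hs0.le]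
        · rw [if_neg hg, if_neg hg, Pi.add_apply, Pi.smul_apply]
          exact quad_bound (u₀ g) (w g) hg s
      have hfin : s * d + s ^ 2 * C ≤ 0 := by nlinarith
      linarith
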